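/- arXiv:2604.13089 — 4 statements merged into one kernel-verified Lean document; each statement's English description precedes it below -/
import Mathlib

section
/- Let C be the set of pairs (f, a) where a ≥ 0 is a real number and f : [0, a] → ℝ is a continuous function with f(0) = 0. For α = (f, a) and β = (g, b) in C, define c(α, β) = sup { s ≥ 0 | s ≤ min(a,b) and f(x) = g(x) for all 0 ≤ x ≤ s }, and d_C(α, β) = (a − c(α,β)) + (b − c(α,β)). Then d_C satisfies the triangle inequality: for all α, β, γ in C, d_C(α, γ) ≤ d_C(α, β) + d_C(β, γ). -/
/-- A point of the space `C`: a pair `(f, a)` with `a ≥ 0` and `f` continuous on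
`[0, a]` with `f 0 = 0` (represented by a total function on `ℝ`). -/
structure PtC where
  a : ℝ
  ha : 0 ≤ a
  f : ℝ → ℝ
  hcont : ContinuousOn f (Set.Icc 0 a)
  hf0 : f 0 = 0

/-- The moment of separation `c(α, β)`. -/
noncomputable def sep (α β : PtC) : ℝ :=
  sSup {s : ℝ | 0 ≤ s ∧ s ≤ min α.a β.a ∧ ∀ x ∈ Set.Icc (0:ℝ) s, α.f x = β.f x}

/-- The distance `d_C(α, β) = (a − c) + (b − c)`. -/
noncomputable def dC (α β : PtC) : ℝ := (α.a - sep α β) + (β.a - sep α β)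

lemma sepSet_nonempty (α β : PtC) :
    {s : ℝ | 0 ≤ s ∧ s ≤ min α.a β.a ∧ ∀ x ∈ Set.Icc (0:ℝ) s, α.f x = β.f x}.Nonempty :=
  ⟨0, le_refl 0, le_min α.ha β.ha, by
    intro x hx
    have : x = 0 := le_antisymm hx.2 hx.1
    rw [this, α.hf0, β.hf0]⟩

lemma sepSet_bdd (α β : PtC) :
    BddAbove {s : ℝ | 0 ≤ s ∧ s ≤ min α.a β.a ∧ ∀ x ∈ Set.Icc (0:ℝ) s, α.f x = β.f x} :=
  ⟨min α.a β.a, fun _ hs => hs.2.1⟩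

lemma sep_nonneg (α β : PtC) : 0 ≤ sep α β := by
  apply le_csSup (sepSet_bdd α β)
  exact ⟨le_refl 0, le_min α.ha β.ha, by
    intro x hx
    have : x = 0 := le_antisymm hx.2 hx.1
    rw [this, α.hf0, β.hf0]⟩

lemma sep_le_min (α β : PtC) : sep α β ≤ min α.a β.a :=
  csSup_le (sepSet_nonempty α β) fun _ hs => hs.2.1

lemma min_sep_le (α β γ : PtC) : min (sep α β) (sep β γ) ≤ sep α γ := by
  apply le_of_forall_sub_le
  intro ε hε
  have h1 : sep α β - ε < sep α β := by linarith
  have h2 : sep β γ - ε < sep β γ := by linarith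
  obtain ⟨s1, hs1, hs1'⟩ := exists_lt_of_lt_csSup (sepSet_nonempty α β) h1
  obtain ⟨s2, hs2, hs2'⟩ := exists_lt_of_lt_csSup (sepSet_nonempty β γ) h2
  have hmem : min s1 s2 ∈ {s : ℝ | 0 ≤ s ∧ s ≤ min α.a γ.a ∧
      ∀ x ∈ Set.Icc (0:ℝ) s, α.f x = γ.f x} := by
    refine ⟨le_min hs1.1 hs2.1, ?_, ?_⟩
    · exact le_min ((min_le_left s1 s2).trans (hs1.2.1.trans (min_le_left _ _)))
        ((min_le_right s1 s2).trans (hs2.2.1.trans (min_le_right _ _)))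
    · intro x hx
      have hx1 : x ∈ Set.Icc (0:ℝ) s1 := ⟨hx.1, hx.2.trans (min_le_left _ _)⟩
      have hx2 : x ∈ Set.Icc (0:ℝ) s2 := ⟨hx.1, hx.2.trans (min_le_right _ _)⟩
      rw [hs1.2.2 x hx1, hs2.2.2 x hx2]
  have key : min s1 s2 ≤ sep α γ := le_csSup (sepSet_bdd α γ) hmem
  have hmm : min (sep α β - ε) (sep β γ - ε) ≤ min s1 s2 := min_le_min hs1'.le hs2'.le
  rw [min_sub_sub_right] at hmm
  linarith

/-- `d_C` satisfies the triangle inequality. -/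
theorem dC_triangle (α β γ : PtC) : dC α γ ≤ dC α β + dC β γ := by
  unfold dC
  have h1 := min_sep_le α β γ
  have h2 := sep_le_min α β
  have h3 := sep_le_min β γ
  have h2b : sep α β ≤ β.a := h2.trans (min_le_right _ _)
  have h3b : sep β γ ≤ β.a := h3.trans (min_le_left _ _)
  rcases min_le_iff.mp (le_refl (min (sep α β) (sep β γ))) with _ | _
  all_goals rcases le_total (sep α β) (sep β γ) with h | h
  · rw [min_eq_left h] at h1; linarith
  · rw [min_eq_right h] at h1; linarith
  · rw [min_eq_left h] at h1; linarith
  · rw [min_eq_right h] at h1; linarith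
end

section
/- Let (Λ, ≤) be a linearly ordered set with a top element λ₀, and let g : Λ → ℝ be an order-reversing function with g(λ₀) = 0 whose image contains [0, ∞). Let 𝓕 be the set of pairs (f, λ₁) with λ₁ ∈ Λ and f a real-valued function on {λ | λ₁ ≤ λ ≤ λ₀}. For α₁ = (f₁, λ₁), α₂ = (f₂, λ₂) ∈ 𝓕 define c(α₁,α₂) = sup{ s ∈ ℝ | 0 ≤ s ≤ min(g(λ₁), g(λ₂)) and f₁(λ) = f₂(λ) for all λ with g(λ) ≤ s } and δ(α₁, α₂) = (g(λ₁) − c) + (g(λ₂) − c). Then δ is symmetric, nonnegative, and satisfies the triangle inequality on 𝓕. -/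
/-- A point of the generalized tree space `𝓕`: a cutoff `cut ∈ Λ` together with a
real-valued function on `{λ | cut ≤ λ ≤ lam0}` (represented by a total function). -/
structure PtF (Λ : Type*) where
  cut : Λ
  f : Λ → ℝ

/-- The separation level `c(α₁, α₂)`. -/
noncomputable def sepF {Λ : Type*} [LinearOrder Λ] (g : Λ → ℝ) (α β : PtF Λ) : ℝ :=
  sSup {s : ℝ | 0 ≤ s ∧ s ≤ min (g α.cut) (g β.cut) ∧
    ∀ μ : Λ, α.cut ≤ μ → β.cut ≤ μ → g μ ≤ s → α.f μ = β.f μ}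

/-- The distance `δ(α₁, α₂) = (g(λ₁) − c) + (g(λ₂) − c)`. -/
noncomputable def deltaF {Λ : Type*} [LinearOrder Λ] (g : Λ → ℝ) (α β : PtF Λ) : ℝ :=
  (g α.cut - sepF g α β) + (g β.cut - sepF g α β)

/-- with `lam0` a top element of `Λ` and `g` order-reversing, `g(lam0) = 0`,
image containing `[0, ∞)`, the function `δ` is symmetric, nonnegative and satisfies the
triangle inequality on `𝓕`. -/
theorem deltaF_pseudometric {Λ : Type*} [LinearOrder Λ] (lam0 : Λ) (htop : ∀ μ : Λ, μ ≤ lam0)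
    (g : Λ → ℝ) (hanti : ∀ a b : Λ, a ≤ b → g b ≤ g a) (hg0 : g lam0 = 0)
    (hsurj : ∀ r : ℝ, 0 ≤ r → ∃ μ : Λ, g μ = r) :
    (∀ α β : PtF Λ, deltaF g α β = deltaF g β α) ∧
    (∀ α β : PtF Λ, 0 ≤ deltaF g α β) ∧
    (∀ α β γ : PtF Λ, deltaF g α γ ≤ deltaF g α β + deltaF g β γ) := by
  have hg_nonneg : ∀ μ : Λ, 0 ≤ g μ := fun μ => by
    have := hanti μ lam0 (htop μ); rw [hg0] at this; exact this
  set S : PtF Λ → PtF Λ → Set ℝ := fun α β =>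
    {s : ℝ | 0 ≤ s ∧ s ≤ min (g α.cut) (g β.cut) ∧
      ∀ μ : Λ, α.cut ≤ μ → β.cut ≤ μ → g μ ≤ s → α.f μ = β.f μ} with hSdef
  have hS : ∀ α β : PtF Λ, sepF g α β = sSup (S α β) := fun _ _ => rfl
  have hbdd : ∀ α β : PtF Λ, BddAbove (S α β) :=
    fun α β => ⟨min (g α.cut) (g β.cut), fun s hs => hs.2.1⟩
  have hsep_nonneg : ∀ α β : PtF Λ, 0 ≤ sepF g α β := by
    intro α β
    rw [hS]
    exact Real.sSup_nonneg (fun s hs => hs.1)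
  have hsep_le : ∀ α β : PtF Λ, sepF g α β ≤ min (g α.cut) (g β.cut) := by
    intro α β
    rw [hS]
    exact Real.sSup_le (fun s hs => hs.2.1) (le_min (hg_nonneg _) (hg_nonneg _))
  have hex : ∀ (α β : PtF Λ) (s : ℝ), 0 ≤ s → s < sepF g α β →
      ∃ t ∈ S α β, s < t := by
    intro α β s hs0 hs
    have hne : (S α β).Nonempty := by
      by_contra hne
      rw [Set.not_nonempty_iff_eq_empty] at hne
      rw [hS, hne, Real.sSup_empty] at hs
      linarith
    rw [hS] at hs
    exact (lt_csSup_iff (hbdd α β) hne).mp hs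
  have hsymm : ∀ α β : PtF Λ, sepF g α β = sepF g β α := by
    intro α β
    rw [hS, hS]
    congr 1
    ext s
    constructor <;> rintro ⟨h1, h2, h3⟩ <;>
      exact ⟨h1, by rwa [min_comm], fun μ ha hb hμ => (h3 μ hb ha hμ).symm⟩
  have hkey : ∀ α β γ : PtF Λ, min (sepF g α β) (sepF g β γ) ≤ sepF g α γ := by
    intro α β γ
    refine le_of_forall_lt fun s hs => ?_
    rcases lt_or_ge s 0 with h0 | h0
    · exact h0.trans_le (hsep_nonneg α γ)
    set s' := (s + min (sepF g α β) (sepF g β γ)) / 2 with hs'def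
    have hs'1 : s < s' := by
      simp only [hs'def]; linarith
    have hs'2a : s' < sepF g α β := by
      have := min_le_left (sepF g α β) (sepF g β γ)
      simp only [hs'def]; linarith
    have hs'2b : s' < sepF g β γ := by
      have := min_le_right (sepF g α β) (sepF g β γ)
      simp only [hs'def]; linarith
    have hs'0 : 0 ≤ s' := le_of_lt (h0.trans_lt hs'1)
    have hmem : s' ∈ S α γ := by
      refine ⟨hs'0, le_min ?_ ?_, ?_⟩
      · exact le_of_lt (hs'2a.trans_le ((hsep_le α β).trans (min_le_left _ _)))
      · exact le_of_lt (hs'2b.trans_le ((hsep_le β γ).trans (min_le_right _ _)))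
      · intro μ ha hc hμ
        have hbμ : β.cut ≤ μ := by
          by_contra hb
          push_neg at hb
          have h1 : g β.cut ≤ g μ := hanti μ β.cut hb.le
          have h2 : sepF g α β ≤ g β.cut :=
            (hsep_le α β).trans (min_le_right _ _)
          linarith
        obtain ⟨t, ht, hst⟩ := hex α β s' hs'0 hs'2a
        obtain ⟨u, hu, hsu⟩ := hex β γ s' hs'0 hs'2b
        have e1 : α.f μ = β.f μ := ht.2.2 μ ha hbμ (hμ.trans hst.le)
        have e2 : β.f μ = γ.f μ := hu.2.2 μ hbμ hc (hμ.trans hsu.le)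
        rw [e1, e2]
    calc s < s' := hs'1
      _ ≤ sSup (S α γ) := le_csSup (hbdd α γ) hmem
      _ = sepF g α γ := (hS α γ).symm
  refine ⟨?_, ?_, ?_⟩
  · intro α β
    unfold deltaF
    rw [hsymm α β]
    ring
  · intro α β
    have h1 : sepF g α β ≤ g α.cut := (hsep_le α β).trans (min_le_left _ _)
    have h2 : sepF g α β ≤ g β.cut := (hsep_le α β).trans (min_le_right _ _)
    unfold deltaF
    linarith
  · intro α β γ
    have h1 : sepF g α β ≤ g β.cut := (hsep_le α β).trans (min_le_right _ _)
    have h2 : sepF g β γ ≤ g β.cut := (hsep_le β γ).trans (min_le_left _ _)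
    have h3 := hkey α β γ
    unfold deltaF
    rcases le_total (sepF g α β) (sepF g β γ) with h | h
    · rw [min_eq_left h] at h3; linarith
    · rw [min_eq_right h] at h3; linarith
end

section
/- With (Λ, g, 𝓕, δ) as in the generalized tree-space construction, the pseudometric space (𝓕, δ) is 0-hyperbolic: for all four points w, x, y, z ∈ 𝓕, d(x,y) + d(z,w) ≤ max( d(x,z) + d(y,w), d(x,w) + d(y,z) ), where d = δ. -/
/-- The defining set of `sepF`. -/
def sepSet {Λ : Type*} [LinearOrder Λ] (g : Λ → ℝ) (α β : PtF Λ) : Set ℝ :=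
  {s : ℝ | 0 ≤ s ∧ s ≤ min (g α.cut) (g β.cut) ∧
    ∀ μ : Λ, α.cut ≤ μ → β.cut ≤ μ → g μ ≤ s → α.f μ = β.f μ}

lemma sepF_eq {Λ : Type*} [LinearOrder Λ] (g : Λ → ℝ) (α β : PtF Λ) :
    sepF g α β = sSup (sepSet g α β) := rfl

lemma sepSet_bdd_s16 {Λ : Type*} [LinearOrder Λ] (g : Λ → ℝ) (α β : PtF Λ) :
    BddAbove (sepSet g α β) :=
  ⟨min (g α.cut) (g β.cut), fun _ hs => hs.2.1⟩

lemma sepF_nonneg {Λ : Type*} [LinearOrder Λ] (g : Λ → ℝ) (α β : PtF Λ) :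
    0 ≤ sepF g α β :=
  Real.sSup_nonneg (fun _ hs => hs.1)

lemma sepF_comm {Λ : Type*} [LinearOrder Λ] (g : Λ → ℝ) (α β : PtF Λ) :
    sepF g α β = sepF g β α := by
  rw [sepF_eq, sepF_eq]
  congr 1
  ext s
  constructor <;> rintro ⟨h1, h2, h3⟩ <;>
    exact ⟨h1, by rwa [min_comm], fun μ ha hb hc => (h3 μ hb ha hc).symm⟩

lemma sepF_ultra {Λ : Type*} [LinearOrder Λ] (g : Λ → ℝ)
    (hanti : ∀ a b : Λ, a ≤ b → g b ≤ g a) (x y z : PtF Λ) :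
    min (sepF g x z) (sepF g z y) ≤ sepF g x y := by
  set r := min (sepF g x z) (sepF g z y) with hr
  rcases le_or_gt r 0 with hr0 | hr0
  · exact hr0.trans (sepF_nonneg g x y)
  refine le_of_forall_sub_le fun ε hε => ?_
  rcases le_or_gt r ε with hre | hre
  · have := sepF_nonneg g x y; linarith
  -- S(x,z) and S(z,y) are nonempty
  have hne1 : (sepSet g x z).Nonempty := by
    by_contra h
    rw [Set.not_nonempty_iff_eq_empty] at h
    have h0 : sepF g x z = 0 := by rw [sepF_eq, h, Real.sSup_empty]
    have : r ≤ sepF g x z := min_le_left _ _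
    linarith
  have hne2 : (sepSet g z y).Nonempty := by
    by_contra h
    rw [Set.not_nonempty_iff_eq_empty] at h
    have h0 : sepF g z y = 0 := by rw [sepF_eq, h, Real.sSup_empty]
    have : r ≤ sepF g z y := min_le_right _ _
    linarith
  have hlt1 : r - ε < sSup (sepSet g x z) := by
    rw [← sepF_eq]; have : r ≤ sepF g x z := min_le_left _ _; linarith
  have hlt2 : r - ε < sSup (sepSet g z y) := by
    rw [← sepF_eq]; have : r ≤ sepF g z y := min_le_right _ _; linarith
  obtain ⟨s₁, hs₁S, hs₁⟩ := exists_lt_of_lt_csSup hne1 hlt1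
  obtain ⟨s₂, hs₂S, hs₂⟩ := exists_lt_of_lt_csSup hne2 hlt2
  have hs₁x : s₁ ≤ g x.cut := hs₁S.2.1.trans (min_le_left _ _)
  have hs₁z : s₁ ≤ g z.cut := hs₁S.2.1.trans (min_le_right _ _)
  have hs₂z : s₂ ≤ g z.cut := hs₂S.2.1.trans (min_le_left _ _)
  have hs₂y : s₂ ≤ g y.cut := hs₂S.2.1.trans (min_le_right _ _)
  have hmem : r - ε ∈ sepSet g x y := by
    refine ⟨by linarith, le_min (by linarith) (by linarith), fun μ hxμ hyμ hgμ => ?_⟩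
    have hzμ : z.cut ≤ μ := by
      by_contra hcon
      push_neg at hcon
      have hgz : g z.cut ≤ g μ := hanti μ z.cut hcon.le
      linarith
    have e1 : x.f μ = z.f μ := hs₁S.2.2 μ hxμ hzμ (by linarith)
    have e2 : z.f μ = y.f μ := hs₂S.2.2 μ hzμ hyμ (by linarith)
    exact e1.trans e2
  rw [sepF_eq]
  exact le_csSup (sepSet_bdd_s16 g x y) hmem

lemma ultra_four {ab cd ac bd ad bc : ℝ} (h1 : min ac bc ≤ ab) (h2 : min ad bd ≤ ab)
    (h3 : min ac ad ≤ cd) (h4 : min bc bd ≤ cd) : min (ac + bd) (ad + bc) ≤ ab + cd := by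
  rcases le_total ab cd with hd | hd <;>
  · simp only [min_le_iff] at h1 h2 h3 h4 ⊢
    rcases h1 with h1 | h1 <;> rcases h2 with h2 | h2 <;>
      rcases h3 with h3 | h3 <;> rcases h4 with h4 | h4 <;>
      first | (left; linarith) | (right; linarith)

/-- `(𝓕, δ)` is 0-hyperbolic: the four-point condition
`δ(x,y) + δ(z,w) ≤ max(δ(x,z) + δ(y,w), δ(x,w) + δ(y,z))`. -/
theorem deltaF_zero_hyperbolic {Λ : Type*} [LinearOrder Λ] (lam0 : Λ) (htop : ∀ μ : Λ, μ ≤ lam0)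
    (g : Λ → ℝ) (hanti : ∀ a b : Λ, a ≤ b → g b ≤ g a) (hg0 : g lam0 = 0)
    (hsurj : ∀ r : ℝ, 0 ≤ r → ∃ μ : Λ, g μ = r) :
    ∀ w x y z : PtF Λ,
      deltaF g x y + deltaF g z w ≤
        max (deltaF g x z + deltaF g y w) (deltaF g x w + deltaF g y z) := by
  intro w x y z
  have k1 : min (sepF g x z) (sepF g z y) ≤ sepF g x y := sepF_ultra g hanti x y z
  have k2 : min (sepF g x w) (sepF g w y) ≤ sepF g x y := sepF_ultra g hanti x y w
  have k3 : min (sepF g z x) (sepF g x w) ≤ sepF g z w := sepF_ultra g hanti z w x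
  have k4 : min (sepF g z y) (sepF g y w) ≤ sepF g z w := sepF_ultra g hanti z w y
  rw [sepF_comm g z y] at k1 k4
  rw [sepF_comm g w y] at k2
  rw [sepF_comm g z x] at k3
  have key : min (sepF g x z + sepF g y w) (sepF g x w + sepF g y z) ≤
      sepF g x y + sepF g z w := ultra_four k1 k2 k3 k4
  unfold deltaF
  rcases le_total (sepF g x z + sepF g y w) (sepF g x w + sepF g y z) with h | h
  · apply le_max_of_le_left
    rw [min_eq_left h] at key
    linarith
  · apply le_max_of_le_right
    rw [min_eq_right h] at key
    linarith
end

section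
/- The space C of pairs (f, a) (a ≥ 0, f : [0,a] → ℝ continuous, f(0)=0) with the metric d_C branches at every point: for every α = (f, a) ∈ C and every r > 0, there exist infinitely many points β₁, β₂, … ∈ C with d_C(α, β_i) = r for all i and d_C(β_i, β_j) = 2r for all i ≠ j. -/
/-- Extension of `α` by a segment of slope `i` on `[a, a+r]`. -/
noncomputable def ext (α : PtC) (r : ℝ) (hr : 0 < r) (i : ℕ) : PtC where
  a := α.a + r
  ha := by linarith [α.ha]
  f := fun x => α.f (min x α.a) + (i : ℝ) * (max x α.a - α.a)
  hcont := by
    apply ContinuousOn.add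
    · apply α.hcont.comp ((continuous_id.min continuous_const).continuousOn)
      intro x hx
      exact ⟨le_min hx.1 α.ha, min_le_right _ _⟩
    · exact (continuous_const.mul ((continuous_id.max continuous_const).sub
        continuous_const)).continuousOn
  hf0 := by
    simp [min_eq_left α.ha, max_eq_right α.ha, α.hf0]

lemma ext_eq (α : PtC) (r : ℝ) (hr : 0 < r) (i : ℕ) {x : ℝ} (hx : x ≤ α.a) :
    (ext α r hr i).f x = α.f x := by
  simp [ext, min_eq_left hx, max_eq_right hx]

/-- `(C, d_C)` branches at every point: for each `α` and `r > 0` there are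
infinitely many points `β_i` with `d_C(α, β_i) = r` and `d_C(β_i, β_j) = 2r` for `i ≠ j`. -/
theorem dC_branches (α : PtC) (r : ℝ) (hr : 0 < r) :
    ∃ β : ℕ → PtC, (∀ i, dC α (β i) = r) ∧ ∀ i j, i ≠ j → dC (β i) (β j) = 2 * r := by
  refine ⟨fun i => ext α r hr i, ?_, ?_⟩
  · intro i
    have hset : {s : ℝ | 0 ≤ s ∧ s ≤ min α.a (ext α r hr i).a ∧
        ∀ x ∈ Set.Icc (0:ℝ) s, α.f x = (ext α r hr i).f x} = Set.Icc 0 α.a := by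
      ext s
      constructor
      · rintro ⟨h0, hs, -⟩
        exact ⟨h0, le_trans hs (min_le_left _ _)⟩
      · rintro ⟨h0, hs⟩
        refine ⟨h0, ?_, ?_⟩
        · apply le_min hs
          show s ≤ α.a + r
          linarith
        · intro x hx
          exact (ext_eq α r hr i (le_trans hx.2 hs)).symm
    have : sep α (ext α r hr i) = α.a := by
      rw [sep, hset, csSup_Icc α.ha]
    simp only [dC, this]
    show α.a - α.a + (α.a + r - α.a) = r
    ring
  · intro i j hij
    have hset : {s : ℝ | 0 ≤ s ∧ s ≤ min (ext α r hr i).a (ext α r hr j).a ∧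
        ∀ x ∈ Set.Icc (0:ℝ) s, (ext α r hr i).f x = (ext α r hr j).f x} = Set.Icc 0 α.a := by
      ext s
      constructor
      · rintro ⟨h0, hs, heq⟩
        refine ⟨h0, ?_⟩
        by_contra h
        push_neg at h
        have hs' : s ∈ Set.Icc (0:ℝ) s := ⟨h0, le_refl s⟩
        have := heq s hs'
        simp only [ext, max_eq_left h.le] at this
        have h2 : (i : ℝ) * (s - α.a) = (j : ℝ) * (s - α.a) := by linarith
        have h3 : (i : ℝ) = (j : ℝ) :=
          mul_right_cancel₀ (by linarith : s - α.a ≠ 0) h2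
        exact hij (Nat.cast_injective h3)
      · rintro ⟨h0, hs⟩
        refine ⟨h0, ?_, ?_⟩
        · show s ≤ min (α.a + r) (α.a + r)
          simp; linarith
        · intro x hx
          rw [ext_eq α r hr i (le_trans hx.2 hs), ext_eq α r hr j (le_trans hx.2 hs)]
    have : sep (ext α r hr i) (ext α r hr j) = α.a := by
      rw [sep, hset, csSup_Icc α.ha]
    simp only [dC, this]
    show α.a + r - α.a + (α.a + r - α.a) = 2 * r
    ring
end
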